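/- Let N ≥ 1, k ≥ 1 and l ≥ 0 be integers. There exists a polynomial P of degree exactly l such that the function φ defined in polar coordinates on ℝ² by φ(r,θ) = r^{kN} P(r²) sin(kNθ) is smooth on ℝ² and is an eigenfunction of the linear operator L: it satisfies Δφ(ξ) - ξ·Dφ(ξ) + φ(ξ) = (1 - (kN + 2l)) φ(ξ) for all ξ ∈ ℝ². -/

import Mathlib

open Real MeasureTheory Filter
open scoped RealInnerProductSpace ENNReal

noncomputable section

/-- The Euclidean plane ℝ². -/
abbrev E2 : Type := EuclideanSpace ℝ (Fin 2)

/-- The point of ℝ² with polar coordinates `(r, θ)`. -/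
def polar (r θ : ℝ) : E2 :=
  (WithLp.equiv 2 (Fin 2 → ℝ)).symm ![r * Real.cos θ, r * Real.sin θ]

/-- Partial derivative in the `i`-th coordinate direction. -/
def pd (i : Fin 2) (u : E2 → ℝ) (ξ : E2) : ℝ :=
  fderiv ℝ u ξ (EuclideanSpace.single i 1)

/-- `g^{ij}(p) = δ_{ij} - pᵢpⱼ/(1+|p|²)`. -/
def gcoef (p : E2) (i j : Fin 2) : ℝ :=
  (if i = j then (1 : ℝ) else 0) - p i * p j / (1 + ‖p‖ ^ 2)

/-- The self-shrinker operator `E(u)(ξ) = g^{ij}(Du)D_{ij}u - ξ·Du + u`. -/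
def Eop (u : E2 → ℝ) (ξ : E2) : ℝ :=
  (∑ i, ∑ j, gcoef (gradient u ξ) i j * pd i (pd j u) ξ)
    - (∑ i, ξ i * pd i u ξ) + u ξ

/-- The linear operator `L(u) = Δu - ξ·Du + u`. -/
def Lop (u : E2 → ℝ) (ξ : E2) : ℝ :=
  (∑ i, pd i (pd i u) ξ) - (∑ i, ξ i * pd i u ξ) + u ξ

/-- The `C⁴` norm of `f` on `[0, 2π]`. -/
def C4Norm (f : ℝ → ℝ) : ℝ :=
  ⨆ θ ∈ Set.Icc (0 : ℝ) (2 * Real.pi), ∑ k ∈ Finset.range 5, |iteratedDeriv k f θ|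

/-- The outer plane `Ω = {ξ : |ξ| > R}`. -/
def Om (R : ℝ) : Set E2 := {ξ | R < ‖ξ‖}

/-- The sector `Ω_{R,N} = {(r,θ) : r > R, -π/N < θ < π/N}` in polar coordinates. -/
def sector (R : ℝ) (N : ℕ) : Set E2 :=
  {ξ | ∃ r θ : ℝ, R < r ∧ |θ| < Real.pi / N ∧ ξ = polar r θ}

/-- The Gaussian measure `dm(ξ) = e^{-|ξ|²/2} dξ` on the plane. -/
def gaussMeasure : Measure E2 :=
  volume.withDensity fun ξ => ENNReal.ofReal (Real.exp (-‖ξ‖ ^ 2 / 2))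

open Polynomial

/-- Coefficients of the Laguerre-type polynomial. -/
def lagCoef (m l : ℕ) : ℕ → ℝ
  | 0 => 1
  | n + 1 => (((n : ℝ) - l) / (2 * (n + 1) * ((n : ℝ) + 1 + m))) * lagCoef m l n

lemma lagCoef_ne_zero (m l : ℕ) : ∀ n : ℕ, n ≤ l → lagCoef m l n ≠ 0 := by
  intro n
  induction n with
  | zero => intro _; simp [lagCoef]
  | succ n ih =>
    intro hn
    have h1 : (n : ℝ) - l ≠ 0 := by
      have : n < l := Nat.lt_of_succ_le hn
      have : (n : ℝ) < l := by exact_mod_cast this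
      linarith
    have h2 : (2 * ((n : ℝ) + 1) * ((n : ℝ) + 1 + m)) ≠ 0 := by positivity
    have := ih (le_of_lt (Nat.lt_of_succ_le hn))
    simp only [lagCoef]
    exact mul_ne_zero (div_ne_zero h1 h2) this

lemma lagCoef_eq_zero (m l : ℕ) : ∀ n : ℕ, l < n → lagCoef m l n = 0 := by
  intro n
  induction n with
  | zero => omega
  | succ n ih =>
    intro hn
    rcases Nat.lt_or_ge l n with h | h
    · simp [lagCoef, ih h]
    · have : n = l := by omega
      subst this
      simp [lagCoef]

/-- The Laguerre-type polynomial solving `2XP'' + (2+2m-X)P' + lP = 0`. -/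
def lagPoly (m l : ℕ) : ℝ[X] :=
  ∑ n ∈ Finset.range (l + 1), C (lagCoef m l n) * X ^ n

lemma lagPoly_coeff (m l n : ℕ) : (lagPoly m l).coeff n = lagCoef m l n := by
  rcases Nat.lt_or_ge n (l+1) with h | h
  · rw [lagPoly, finset_sum_coeff]
    rw [Finset.sum_eq_single n]
    · simp
    · intro b _ hb; simp [coeff_C_mul, coeff_X_pow, Ne.symm hb]
    · intro hb; exact absurd (Finset.mem_range.2 h) hb
  · rw [lagCoef_eq_zero m l n (by omega)]
    rw [lagPoly, finset_sum_coeff]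
    apply Finset.sum_eq_zero
    intro b hb
    have hbn : b ≠ n := by have := Finset.mem_range.1 hb; omega
    simp only [coeff_C_mul, coeff_X_pow]
    rw [if_neg (Ne.symm hbn), mul_zero]

lemma lagPoly_natDegree (m l : ℕ) : (lagPoly m l).natDegree = l := by
  apply le_antisymm
  · apply natDegree_le_iff_coeff_eq_zero.2
    intro n hn
    rw [lagPoly_coeff]
    exact lagCoef_eq_zero m l n hn
  · apply le_natDegree_of_ne_zero
    rw [lagPoly_coeff]
    exact lagCoef_ne_zero m l l le_rfl

lemma lagPoly_ne_zero (m l : ℕ) : lagPoly m l ≠ 0 := by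
  intro h
  have := lagPoly_coeff m l l
  rw [h] at this
  exact lagCoef_ne_zero m l l le_rfl (by simpa using this.symm)

/-- Recursion identity for the coefficients. -/
lemma lagCoef_rec (m l n : ℕ) :
    2 * ((n : ℝ) + 1) * ((n : ℝ) + 1 + m) * lagCoef m l (n + 1)
      = ((n : ℝ) - l) * lagCoef m l n := by
  have h2 : (2 * ((n : ℝ) + 1) * ((n : ℝ) + 1 + m)) ≠ 0 := by positivity
  simp only [lagCoef]
  field_simp

/-- The key ODE: `2XP'' + (2+2m)P' - XP' + lP = 0`. -/
lemma lagPoly_ode (m l : ℕ) :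
    X * (C 2 * derivative (derivative (lagPoly m l)))
      + (C (2 + 2 * (m : ℝ)) - X) * derivative (lagPoly m l)
      + C (l : ℝ) * lagPoly m l = 0 := by
  ext n
  have e1 : ((C (2 + 2 * (m : ℝ)) - X) * derivative (lagPoly m l))
      = C (2 + 2 * (m : ℝ)) * derivative (lagPoly m l)
        - X * derivative (lagPoly m l) := by ring
  rcases n with _ | n
  · simp only [coeff_add, coeff_zero, e1, coeff_sub, coeff_X_mul_zero, coeff_C_mul,
      coeff_derivative, lagPoly_coeff]
    have := lagCoef_rec m l 0
    push_cast at this ⊢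
    nlinarith [this]
  · simp only [coeff_add, coeff_zero, e1, coeff_sub, coeff_X_mul, coeff_C_mul,
      coeff_derivative, lagPoly_coeff]
    have := lagCoef_rec m l (n + 1)
    push_cast at this ⊢
    nlinarith [this]

/-! ### Harmonic polynomials Re/Im of `(x+iy)^m` as multivariate polynomials -/

open MvPolynomial

abbrev R2 : Type := MvPolynomial (Fin 2) ℝ

/-- `(AB m).1 = Re((x+iy)^m)`, `(AB m).2 = Im((x+iy)^m)`. -/
def AB : ℕ → R2 × R2
  | 0 => (1, 0)
  | m + 1 => (X 0 * (AB m).1 - X 1 * (AB m).2, X 0 * (AB m).2 + X 1 * (AB m).1)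

lemma CR (m : ℕ) :
    pderiv 0 (AB (m + 1)).1 = MvPolynomial.C ((m : ℝ) + 1) * (AB m).1 ∧
    pderiv 1 (AB (m + 1)).1 = -(MvPolynomial.C ((m : ℝ) + 1) * (AB m).2) ∧
    pderiv 0 (AB (m + 1)).2 = MvPolynomial.C ((m : ℝ) + 1) * (AB m).2 ∧
    pderiv 1 (AB (m + 1)).2 = MvPolynomial.C ((m : ℝ) + 1) * (AB m).1 := by
  induction m with
  | zero =>
    refine ⟨?_, ?_, ?_, ?_⟩ <;>
      simp [AB, pderiv_X_self, pderiv_X_of_ne (show (1:Fin 2) ≠ 0 by decide),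
        pderiv_X_of_ne (show (0:Fin 2) ≠ 1 by decide), map_one]
  | succ m ih =>
    obtain ⟨h1, h2, h3, h4⟩ := ih
    have e : (AB (m + 2)) = (X 0 * (AB (m+1)).1 - X 1 * (AB (m+1)).2,
        X 0 * (AB (m+1)).2 + X 1 * (AB (m+1)).1) := rfl
    have eAB : (AB (m + 1)).1 = X 0 * (AB m).1 - X 1 * (AB m).2 := rfl
    have eAB2 : (AB (m + 1)).2 = X 0 * (AB m).2 + X 1 * (AB m).1 := rfl
    refine ⟨?_, ?_, ?_, ?_⟩ <;>
    · rw [e]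
      simp only [map_sub, map_add, pderiv_mul, pderiv_X_self,
        pderiv_X_of_ne (show (1:Fin 2) ≠ 0 by decide),
        pderiv_X_of_ne (show (0:Fin 2) ≠ 1 by decide), h1, h2, h3, h4]
      rw [eAB, eAB2]
      push_cast
      simp only [map_add, map_one]
      ring

lemma div0 (m : ℕ) : pderiv 0 (AB m).2 + pderiv 1 (AB m).1 = 0 := by
  cases m with
  | zero => simp [AB]
  | succ m =>
    obtain ⟨h1, h2, h3, h4⟩ := CR m
    rw [h3, h2]
    ring

/-- the polynomial `q = Im((x+iy)^m) P(x²+y²)` and the eigen identity at the level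
of multivariate polynomials. -/
lemma Lq_eq (m l : ℕ) (hm : 1 ≤ m) :
    (pderiv 0 (pderiv 0 ((AB m).2 * Polynomial.aeval (X 0 ^ 2 + X 1 ^ 2 : R2) (lagPoly m l)))
      + pderiv 1 (pderiv 1 ((AB m).2 * Polynomial.aeval (X 0 ^ 2 + X 1 ^ 2 : R2) (lagPoly m l))))
      - (X 0 * pderiv 0 ((AB m).2 * Polynomial.aeval (X 0 ^ 2 + X 1 ^ 2 : R2) (lagPoly m l))
        + X 1 * pderiv 1 ((AB m).2 * Polynomial.aeval (X 0 ^ 2 + X 1 ^ 2 : R2) (lagPoly m l)))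
      + (AB m).2 * Polynomial.aeval (X 0 ^ 2 + X 1 ^ 2 : R2) (lagPoly m l)
    = MvPolynomial.C (1 - ((m : ℝ) + 2 * l))
        * ((AB m).2 * Polynomial.aeval (X 0 ^ 2 + X 1 ^ 2 : R2) (lagPoly m l)) := by
  obtain ⟨m', rfl⟩ : ∃ m', m = m' + 1 := ⟨m - 1, by omega⟩
  obtain ⟨h1, h2, h3, h4⟩ := CR m'
  set ρ : R2 := X 0 ^ 2 + X 1 ^ 2 with hρdef
  set P := lagPoly (m' + 1) l with hP
  set W : R2 := Polynomial.aeval ρ P with hW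
  set W' : R2 := Polynomial.aeval ρ (Polynomial.derivative P) with hW'
  set W'' : R2 := Polynomial.aeval ρ (Polynomial.derivative (Polynomial.derivative P)) with hW''
  set B : R2 := (AB (m' + 1)).2 with hB
  set B' : R2 := (AB m').2 with hB'
  set A' : R2 := (AB m').1 with hA'
  have hfin : (0:Fin 2) ≠ 1 := by decide
  have hfin' : (1:Fin 2) ≠ 0 := by decide
  have hρ0 : pderiv 0 ρ = 2 * X 0 := by
    rw [hρdef]
    simp [pow_two, pderiv_mul, pderiv_X_self, pderiv_X_of_ne hfin]
    ring
  have hρ1 : pderiv 1 ρ = 2 * X 1 := by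
    rw [hρdef]
    simp [pow_two, pderiv_mul, pderiv_X_self, pderiv_X_of_ne hfin']
    ring
  have hW0 : pderiv 0 W = W' * (2 * X 0) := by
    rw [hW, Derivation.map_aeval, smul_eq_mul, hρ0, ← hW']
  have hW1 : pderiv 1 W = W' * (2 * X 1) := by
    rw [hW, Derivation.map_aeval, smul_eq_mul, hρ1, ← hW']
  have hV0 : pderiv 0 W' = W'' * (2 * X 0) := by
    rw [hW', Derivation.map_aeval, smul_eq_mul, hρ0, ← hW'']
  have hV1 : pderiv 1 W' = W'' * (2 * X 1) := by
    rw [hW', Derivation.map_aeval, smul_eq_mul, hρ1, ← hW'']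
  have hdiv : pderiv 0 B' + pderiv 1 A' = 0 := div0 m'
  have hEuler : X 0 * B' + X 1 * A' = B := rfl
  have harg : ((2:ℝ) + 2*((m'+1:ℕ):ℝ)) = 2 + 2*((m':ℝ)+1) := by push_cast; ring
  have hODE : ρ * (2 * W'') + ((2 + 2 * MvPolynomial.C ((m':ℝ)+1)) - ρ) * W'
      + MvPolynomial.C ((l:ℕ):ℝ) * W = 0 := by
    have h := congrArg (Polynomial.aeval ρ) (lagPoly_ode (m'+1) l)
    simp only [map_add, map_mul, map_sub, map_zero, Polynomial.aeval_X, Polynomial.aeval_C,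
      MvPolynomial.algebraMap_eq, harg, map_ofNat] at h
    rw [← hW, ← hW', ← hW''] at h
    simpa [map_add, map_mul, map_ofNat] using h
  have hc2 : (MvPolynomial.C (1 - (((m'+1 : ℕ) : ℝ) + 2 * (l:ℝ))) : R2)
      = 1 - MvPolynomial.C ((m':ℝ)+1) - 2 * MvPolynomial.C ((l:ℕ):ℝ) := by
    have e : (1 - (((m'+1:ℕ):ℝ) + 2*(l:ℝ))) = 1 - ((m':ℝ)+1) - 2*((l:ℕ):ℝ) := by
      push_cast; ring
    rw [e, map_sub, map_sub, map_one, map_mul, map_ofNat]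
  have e0 : pderiv 0 (B * W) = MvPolynomial.C ((m':ℝ)+1) * B' * W + B * (W' * (2 * X 0)) := by
    rw [pderiv_mul, h3, hW0, mul_assoc]
  have e1 : pderiv 1 (B * W) = MvPolynomial.C ((m':ℝ)+1) * A' * W + B * (W' * (2 * X 1)) := by
    rw [pderiv_mul, h4, hW1, mul_assoc]
  have htwo : ∀ i : Fin 2, pderiv i (2 : R2) = 0 := fun i => by
    rw [show (2:R2) = MvPolynomial.C 2 from (map_ofNat _ 2).symm, pderiv_C]
  rw [e0, e1]
  simp only [Derivation.map_add, pderiv_mul, pderiv_C, h3, h4, hV0, hV1, hW0, hW1, htwo,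
    pderiv_X_self, pderiv_X_of_ne hfin, pderiv_X_of_ne hfin',
    zero_mul, mul_zero, zero_add, add_zero, mul_one]
  linear_combination (MvPolynomial.C ((m':ℝ)+1) * W) * hdiv
    + (4 * MvPolynomial.C ((m':ℝ)+1) * W' - MvPolynomial.C ((m':ℝ)+1) * W) * hEuler
    + 2 * B * hODE - (B * W) * hc2

/-! ### Analysis: evaluation of multivariate polynomials on `E2` -/

lemma hasFDerivAt_mveval (q : R2) (ξ : E2) :
    HasFDerivAt (fun x : E2 => MvPolynomial.aeval (fun i => x i) q)
      (∑ i, MvPolynomial.aeval (fun i => ξ i) (pderiv i q) • (EuclideanSpace.proj i : E2 →L[ℝ] ℝ)) ξ := by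
  induction q using MvPolynomial.induction_on with
  | C a =>
    simp only [MvPolynomial.aeval_C, pderiv_C, map_zero, zero_smul, Finset.sum_const_zero]
    exact hasFDerivAt_const _ _
  | add p q hp hq =>
    have := hp.add hq
    simp only [map_add] at this ⊢
    refine this.congr_fderiv ?_
    rw [← Finset.sum_add_distrib]
    congr 1; ext i; rw [add_smul]
  | mul_X p j hp =>
    have hXj : HasFDerivAt (fun x : E2 => x j) (EuclideanSpace.proj j : E2 →L[ℝ] ℝ) ξ :=
      (EuclideanSpace.proj j : E2 →L[ℝ] ℝ).hasFDerivAt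
    have := hp.mul hXj
    simp only [map_mul, MvPolynomial.aeval_X] at this ⊢
    refine this.congr_fderiv ?_
    ext v
    simp only [ContinuousLinearMap.sum_apply, ContinuousLinearMap.smul_apply,
      ContinuousLinearMap.add_apply, ContinuousLinearMap.coe_smul', Pi.smul_apply,
      PiLp.proj_apply, smul_eq_mul, pderiv_mul, map_add, map_mul, MvPolynomial.aeval_X,
      pderiv_X]
    rw [Fin.sum_univ_two]
    fin_cases j <;>
      simp [Pi.single_apply, Fin.sum_univ_two] <;> ring

lemma contDiff_mveval (q : R2) :
    ContDiff ℝ (⊤ : ℕ∞) (fun x : E2 => MvPolynomial.aeval (fun i => x i) q) := by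
  induction q using MvPolynomial.induction_on with
  | C a =>
    have : (fun x : E2 => MvPolynomial.aeval (fun i => x i) (MvPolynomial.C a : R2)) = fun _ => a := by
      funext x; simp
    rw [this]; exact contDiff_const
  | add p q hp hq => simpa [map_add] using hp.add hq
  | mul_X p j hp =>
    have : ContDiff ℝ (⊤ : ℕ∞) (fun x : E2 => x j) := (EuclideanSpace.proj j : E2 →L[ℝ] ℝ).contDiff
    simpa [map_mul] using hp.mul this

lemma fderiv_mveval_apply (q : R2) (ξ : E2) (i : Fin 2) :
    fderiv ℝ (fun x : E2 => MvPolynomial.aeval (fun j => x j) q) ξ (EuclideanSpace.single i 1)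
      = MvPolynomial.aeval (fun j => ξ j) (pderiv i q) := by
  rw [(hasFDerivAt_mveval q ξ).fderiv]
  simp only [ContinuousLinearMap.sum_apply, ContinuousLinearMap.smul_apply, PiLp.proj_apply,
    smul_eq_mul, EuclideanSpace.single_apply]
  rw [Fin.sum_univ_two]
  fin_cases i <;> simp

/-! ### Polar evaluation -/

lemma polar_apply0 (r θ : ℝ) : (polar r θ) 0 = r * Real.cos θ := by
  rw [polar]; rfl

lemma polar_apply1 (r θ : ℝ) : (polar r θ) 1 = r * Real.sin θ := by
  rw [polar]; rfl

lemma aeval_AB (r θ : ℝ) (m : ℕ) :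
    MvPolynomial.aeval (fun i => (polar r θ) i) (AB m).1 = r ^ m * Real.cos (m * θ) ∧
    MvPolynomial.aeval (fun i => (polar r θ) i) (AB m).2 = r ^ m * Real.sin (m * θ) := by
  induction m with
  | zero => simp [AB]
  | succ m ih =>
    obtain ⟨ihA, ihB⟩ := ih
    have eA : (AB (m + 1)).1 = X 0 * (AB m).1 - X 1 * (AB m).2 := rfl
    have eB : (AB (m + 1)).2 = X 0 * (AB m).2 + X 1 * (AB m).1 := rfl
    constructor
    · rw [eA]
      simp only [map_sub, map_mul, MvPolynomial.aeval_X, ihA, ihB, polar_apply0, polar_apply1]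
      have : ((m + 1 : ℕ) : ℝ) * θ = (m : ℝ) * θ + θ := by push_cast; ring
      rw [this, Real.cos_add]
      ring
    · rw [eB]
      simp only [map_add, map_mul, MvPolynomial.aeval_X, ihA, ihB, polar_apply0, polar_apply1]
      have : ((m + 1 : ℕ) : ℝ) * θ = (m : ℝ) * θ + θ := by push_cast; ring
      rw [this, Real.sin_add]
      ring

lemma aeval_rho (ξ : E2) :
    MvPolynomial.aeval (fun i => ξ i) (X 0 ^ 2 + X 1 ^ 2 : R2) = ξ 0 ^ 2 + ξ 1 ^ 2 := by
  simp


/-- Existence of the eigenfunctions `r^{kN} P_{k,l}(r²) sin(kNθ)` of the linear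
operator `L`, with eigenvalue `1 - (kN + 2l)`. -/
theorem statement_5 (N k l : ℕ) (hN : 1 ≤ N) (hk : 1 ≤ k) :
    ∃ P : Polynomial ℝ, P.natDegree = l ∧ P ≠ 0 ∧
      ∃ φ : E2 → ℝ, ContDiff ℝ (⊤ : ℕ∞) φ ∧
        (∀ r θ : ℝ,
          φ (polar r θ) = r ^ (k * N) * P.eval (r ^ 2) * Real.sin (((k * N : ℕ) : ℝ) * θ)) ∧
        (∀ ξ : E2, Lop φ ξ = (1 - ((k * N + 2 * l : ℕ) : ℝ)) * φ ξ) := by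
  set m := k * N with hmdef
  have hm : 1 ≤ m := Nat.one_le_iff_ne_zero.2 (by positivity)
  set ρ : R2 := X 0 ^ 2 + X 1 ^ 2 with hρ
  set q : R2 := (AB m).2 * Polynomial.aeval ρ (lagPoly m l) with hq
  refine ⟨lagPoly m l, lagPoly_natDegree m l, lagPoly_ne_zero m l,
    fun ξ => MvPolynomial.aeval (fun i => ξ i) q, contDiff_mveval q, ?_, ?_⟩
  · intro r θ
    show (MvPolynomial.aeval fun i => (polar r θ) i) ((AB m).2 * Polynomial.aeval ρ (lagPoly m l)) = _
    rw [map_mul, (aeval_AB r θ m).2]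
    have h1 : MvPolynomial.aeval (fun i => (polar r θ) i) (Polynomial.aeval ρ (lagPoly m l))
        = Polynomial.eval (r ^ 2) (lagPoly m l) := by
      rw [← Polynomial.aeval_algHom_apply]
      rw [hρ, aeval_rho, polar_apply0, polar_apply1]
      have : (r * Real.cos θ) ^ 2 + (r * Real.sin θ) ^ 2 = r ^ 2 := by
        have := Real.sin_sq_add_cos_sq θ
        nlinarith [this]
      rw [this, Polynomial.coe_aeval_eq_eval]
    rw [h1]
    ring
  · intro ξ
    have hpd : ∀ (p : R2) (i : Fin 2),
        pd i (fun x => MvPolynomial.aeval (fun j => x j) p)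
          = fun x => MvPolynomial.aeval (fun j => x j) (pderiv i p) := by
      intro p i
      funext x
      exact fderiv_mveval_apply p x i
    rw [Lop]
    simp only [hpd q, hpd (pderiv 0 q), hpd (pderiv 1 q)]
    rw [Fin.sum_univ_two, Fin.sum_univ_two]
    rw [hpd (pderiv 0 q) 0, hpd (pderiv 1 q) 1]
    have key := congrArg (MvPolynomial.aeval (fun j => ξ j)) (Lq_eq m l hm)
    simp only [map_add, map_sub, map_mul, MvPolynomial.aeval_X, MvPolynomial.aeval_C,
      Algebra.algebraMap_self, RingHom.id_apply] at key
    rw [← map_mul (MvPolynomial.aeval fun j => ξ j) (AB m).2 (Polynomial.aeval ρ (lagPoly m l)),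
      ← hq] at key
    push_cast
    linear_combination key
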